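/- Let ψ, σ₀, α, β be positive constants and let S : ℝ → ℝ be differentiable and strictly positive on (0, ∞), satisfying Nutting's equation σ₀ = ψ^{-1} S(t)^β t^α for all t > 0. Then the instantaneous relaxation time t_r(t) := −S(t)/S'(t) is proportional to a power of the stress: t_r(t) = (β/α) · ψ^{1/α} σ₀^{1/α} · S(t)^{−β/α} for all t > 0. In other words, the Nutting treatment postulates a single relaxation time proportional to a power of the stress. -/

import Mathlib

open Real Filter Topology

/-!
Nutting's equation is symmetric in the pairs `(S, β)` and `(t, α)`: it reads
`S(t)^β · t^α = ψ σ₀`. Solved for `S` it says that the stress is a power law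
`S(t) = c · t^(-α/β)`, whose logarithmic derivative gives `t_r(t) = (β/α) · t`;
solved for `t` it expresses the time through the stress,
`t = (ψ σ₀)^(1/α) · S(t)^(-β/α)`.
-/

noncomputable def relaxationTime (S : ℝ → ℝ) (t : ℝ) : ℝ :=
  -(S t / deriv S t)

lemma eq_mul_rpow_of_rpow_mul_rpow_eq {a b k α β : ℝ} (ha : 0 ≤ a) (hb : 0 < b)
    (hβ : β ≠ 0) (h : a ^ β * b ^ α = k) : a = k ^ (1 / β) * b ^ (-(α / β)) := by
  have hbα : 0 < b ^ α := rpow_pos_of_pos hb α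
  have hk : 0 ≤ k := h ▸ mul_nonneg (rpow_nonneg ha β) hbα.le
  have haβ : a ^ β = k * b ^ (-α) := by
    rw [rpow_neg hb.le, ← h]
    field_simp
  calc a = (a ^ β) ^ (1 / β) := by rw [← rpow_mul ha, mul_one_div_cancel hβ, rpow_one]
    _ = k ^ (1 / β) * b ^ (-(α / β)) := by
      rw [haβ, mul_rpow hk (rpow_nonneg hb.le _), ← rpow_mul hb.le]
      ring_nf

lemma hasDerivAt_of_eventuallyEq_const_mul_rpow {S : ℝ → ℝ} {c p t : ℝ} (ht : t ≠ 0)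
    (hS : S =ᶠ[𝓝 t] fun s => c * s ^ p) : HasDerivAt S (p * S t / t) t := by
  have hSt : S t = c * t ^ p := hS.eq_of_nhds
  have hpow : HasDerivAt (fun s => c * s ^ p) (c * (p * t ^ (p - 1))) t :=
    (hasDerivAt_rpow_const (Or.inl ht)).const_mul c
  have hslope : p * S t / t = c * (p * t ^ (p - 1)) := by
    rw [hSt, rpow_sub_one ht]
    ring
  exact hslope ▸ hpow.congr_of_eventuallyEq hS

lemma relaxationTime_eq_of_eventuallyEq_const_mul_rpow {S : ℝ → ℝ} {c p t : ℝ}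
    (ht : t ≠ 0) (hSt : S t ≠ 0) (hS : S =ᶠ[𝓝 t] fun s => c * s ^ p) :
    relaxationTime S t = -(t / p) := by
  rw [relaxationTime, (hasDerivAt_of_eventuallyEq_const_mul_rpow ht hS).deriv,
    div_div_eq_mul_div, mul_comm p, mul_div_mul_left t p hSt]

theorem nutting_relaxation_time_power_of_stress_general (ψ σ₀ α β : ℝ)
    (hψ : 0 < ψ) (hσ₀ : 0 < σ₀) (hα : 0 < α) (hβ : 0 < β) (S : ℝ → ℝ)
    (hSpos : ∀ t : ℝ, 0 < t → 0 < S t)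
    (hNutting : ∀ t : ℝ, 0 < t → σ₀ = ψ⁻¹ * (S t) ^ β * t ^ α) :
    ∀ t : ℝ, 0 < t →
      -(S t / deriv S t) =
        (β / α) * ψ ^ (1 / α) * σ₀ ^ (1 / α) * (S t) ^ (-(β / α)) := by
  intro t ht
  have hNutting' : ∀ s, 0 < s → S s ^ β * s ^ α = ψ * σ₀ := fun s hs => by
    rw [hNutting s hs]
    field_simp
  have hS_power_law : S =ᶠ[𝓝 t] fun s => (ψ * σ₀) ^ (1 / β) * s ^ (-(α / β)) := by
    filter_upwards [lt_mem_nhds ht] with s hs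
    exact eq_mul_rpow_of_rpow_mul_rpow_eq (hSpos s hs).le hs hβ.ne' (hNutting' s hs)
  have ht_of_S : t = (ψ * σ₀) ^ (1 / α) * S t ^ (-(β / α)) :=
    eq_mul_rpow_of_rpow_mul_rpow_eq ht.le (hSpos t ht) hα.ne'
      (by rw [mul_comm]; exact hNutting' t ht)
  calc -(S t / deriv S t) = -(t / -(α / β)) :=
        relaxationTime_eq_of_eventuallyEq_const_mul_rpow ht.ne' (hSpos t ht).ne' hS_power_law
    _ = β / α * t := by field_simp
    _ = β / α * ((ψ * σ₀) ^ (1 / α) * S t ^ (-(β / α))) := congrArg _ ht_of_S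
    _ = β / α * ψ ^ (1 / α) * σ₀ ^ (1 / α) * S t ^ (-(β / α)) := by
      rw [mul_rpow hψ.le hσ₀.le]
      ring

/-- For a differentiable, strictly positive stress `S` on `(0,∞)` satisfying
Nutting's equation, the instantaneous relaxation time `t_r(t) = −S(t)/S'(t)` is
proportional to a power of the stress:
`t_r(t) = (β/α) · ψ^(1/α) · σ₀^(1/α) · S(t)^(−β/α)`. -/
theorem nutting_relaxation_time_power_of_stress (ψ σ₀ α β : ℝ)
    (hψ : 0 < ψ) (hσ₀ : 0 < σ₀) (hα : 0 < α) (hβ : 0 < β) (S : ℝ → ℝ)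
    (hSdiff : ∀ t : ℝ, 0 < t → DifferentiableAt ℝ S t)
    (hSpos : ∀ t : ℝ, 0 < t → 0 < S t)
    (hNutting : ∀ t : ℝ, 0 < t → σ₀ = ψ⁻¹ * (S t) ^ β * t ^ α) :
    ∀ t : ℝ, 0 < t →
      -(S t / deriv S t) =
        (β / α) * ψ ^ (1 / α) * σ₀ ^ (1 / α) * (S t) ^ (-(β / α)) :=
  nutting_relaxation_time_power_of_stress_general ψ σ₀ α β hψ hσ₀ hα hβ S hSpos hNutting
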